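/- Let G be a locally finite group (every finitely generated subgroup of G is finite). Let α, β, δ ∈ G and suppose δ generates the same cyclic subgroup as ⁅α, β⁆ (i.e. Subgroup.zpowers δ = Subgroup.zpowers ⁅α, β⁆). Then there exist σ, τ in the subgroup generated by {α, β} with δ = ⁅σ, τ⁆. -/

import Mathlib

/-
Honda's theorem for finite groups, proved in a character-free way, and its
consequence: every locally finite group has the strong Honda property.

Strategy: For a prime p not dividing |Γ|, work in R = MonoidAlgebra (ZMod p) Γ.
The orbit sums E(g) = ∑_t single (t g t⁻¹) 1 are central, and (E g)^p = E (g^p)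
by an orbit-counting argument on rotations of p-tuples.  Setting
W = ∑_y E(y)·E(y⁻¹) = ∑_{x,y} E(⁅x,y⁆), Frobenius-type computations give
W^p = W, from which the counts M_e(h) = #{(x,y) : ⁅x,y⁆^e ~ h} satisfy
M_{e·p}(h) ≡ M_1(h) (mod p) whenever M_e = M_1.  Taking p > |Γ|² turns the
congruence into an equality, and a CRT argument produces an exponent
X ≡ a (mod orderOf c) all of whose prime factors exceed |Γ|².
-/

open Finset MonoidAlgebra

open scoped commutatorElement

namespace HondaAux

set_option linter.unusedSectionVars false

attribute [local instance] Classical.propDecidable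

section Rot

variable {X : Type*}

open Fin.NatCast Fin.CommRing

/-- Cyclic rotation of a tuple. -/
def rot (p : ℕ) [NeZero p] (v : Fin p → X) : Fin p → X := fun i => v (i + 1)

lemma rot_iterate (p : ℕ) [NeZero p] (k : ℕ) (v : Fin p → X) (i : Fin p) :
    (rot p)^[k] v i = v (i + k) := by
  induction k generalizing v i with
  | zero => simp
  | succ k ih =>
      rw [Function.iterate_succ_apply, ih (rot p v) i]
      rw [rot]
      congr 1
      push_cast
      ring

lemma rot_iterate_p (p : ℕ) [NeZero p] (v : Fin p → X) : (rot p)^[p] v = v := by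
  funext i
  rw [rot_iterate]
  simp

lemma rot_fixed (p : ℕ) [NeZero p] (v : Fin p → X) (hv : rot p v = v) (i : Fin p) :
    v i = v 0 := by
  have key : ∀ k : ℕ, v (k : Fin p) = v 0 := by
    intro k
    induction k with
    | zero => simp
    | succ k ih =>
        have := congrFun hv (k : Fin p)
        rw [rot] at this
        rw [← ih, ← this]
        congr 1
        push_cast
        ring
  rw [← key i.val, Fin.cast_val_eq_self]

/-- The key counting lemma: for a rotation-invariant property of `p`-tuples,
the number of tuples satisfying it is congruent mod `p` to the number of
constant such tuples. -/
lemma card_modEq_card_fixed (p : ℕ) [Fact p.Prime] [Finite X]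
    (Q : (Fin p → X) → Prop) (hQ : ∀ v, Q v → Q (rot p v)) :
    Nat.card {v : Fin p → X // Q v} ≡ Nat.card {x : X // Q (fun _ => x)} [MOD p] := by
  haveI : NeZero p := ⟨(Fact.out : p.Prime).ne_zero⟩
  set S := {v : Fin p → X // Q v}
  set f : S → S := fun s => ⟨rot p s.1, hQ s.1 s.2⟩ with hf
  have hfiter : ∀ (k : ℕ) (s : S), (f^[k] s).1 = (rot p)^[k] s.1 := by
    intro k
    induction k with
    | zero => intro s; rfl
    | succ k ih =>
        intro s
        rw [Function.iterate_succ_apply, Function.iterate_succ_apply, ih]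
  have hfp : f^[p] = id := by
    funext s
    refine Subtype.ext ?_
    rw [hfiter, rot_iterate_p]
    rfl
  have hp1 : 1 ≤ p := (Fact.out : p.Prime).one_lt.le
  have e1 : p - 1 + 1 = p := by omega
  have hleft : Function.LeftInverse (f^[p-1]) f := by
    intro s
    have h2 := Function.iterate_succ_apply f (p-1) s
    rw [show (p-1).succ = p by omega, hfp] at h2
    exact h2.symm
  have hright : Function.RightInverse (f^[p-1]) f := by
    intro s
    have h2 := Function.iterate_succ_apply' f (p-1) s
    rw [show (p-1).succ = p by omega, hfp] at h2
    exact h2.symm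
  set σ : Equiv.Perm S := ⟨f, f^[p-1], hleft, hright⟩ with hσ
  have hσiter : ∀ (k : ℕ) (s : S), (σ ^ k) s = f^[k] s := by
    intro k
    induction k with
    | zero => intro s; rfl
    | succ k ih =>
        intro s
        rw [pow_succ, Function.iterate_succ_apply]
        exact ih (f s)
  have hσp : σ ^ p = 1 := by
    ext s
    rw [hσiter, hfp]
    rfl
  letI : MulAction (Multiplicative (ZMod p)) S :=
    { smul := fun x s => (σ ^ (x.toAdd.val)) s
      one_smul := fun s => by
        show (σ ^ ((1 : Multiplicative (ZMod p)).toAdd.val)) s = s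
        norm_num [ZMod.val_zero]
      mul_smul := fun x y s => by
        show (σ ^ ((x * y).toAdd.val)) s = (σ ^ x.toAdd.val) ((σ ^ y.toAdd.val) s)
        rw [← Equiv.Perm.mul_apply, ← pow_add]
        have hdvd : orderOf σ ∣ p := orderOf_dvd_of_pow_eq_one hσp
        have hmod : (x * y).toAdd.val ≡ x.toAdd.val + y.toAdd.val [MOD p] := by
          have : (x * y).toAdd = x.toAdd + y.toAdd := rfl
          rw [this, ZMod.val_add]
          exact (Nat.mod_modEq _ p)
        have : (x * y).toAdd.val ≡ x.toAdd.val + y.toAdd.val [MOD orderOf σ] :=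
          Nat.ModEq.of_dvd hdvd hmod
        rw [pow_eq_pow_iff_modEq.mpr this] }
  haveI : Finite S := Subtype.finite
  have hPG : IsPGroup p (Multiplicative (ZMod p)) := by
    apply IsPGroup.of_card
    rw [pow_one, Nat.card_congr Multiplicative.toAdd, Nat.card_zmod]
  have hcong := IsPGroup.card_modEq_card_fixedPoints (α := S) hPG
  have hfix : Nat.card (MulAction.fixedPoints (Multiplicative (ZMod p)) S)
      = Nat.card {x : X // Q (fun _ => x)} := by
    have hval1 : ((Multiplicative.ofAdd (1 : ZMod p)).toAdd).val = 1 := by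
      show (1 : ZMod p).val = 1
      haveI : Fact (1 < p) := ⟨(Fact.out : p.Prime).one_lt⟩
      exact ZMod.val_one p
    have hmem : ∀ s : S, s ∈ MulAction.fixedPoints (Multiplicative (ZMod p)) S ↔
        rot p s.1 = s.1 := by
      intro s
      constructor
      · intro hs
        have h2 := hs (Multiplicative.ofAdd (1 : ZMod p))
        have h3 : (Multiplicative.ofAdd (1 : ZMod p)) • s = (σ ^ 1) s := by
          show (σ ^ ((Multiplicative.ofAdd (1 : ZMod p)).toAdd).val) s = (σ ^ 1) s
          rw [hval1]
        rw [h3, pow_one] at h2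
        have h4 := congrArg Subtype.val h2
        exact h4
      · intro hs x
        show (σ ^ (x.toAdd.val)) s = s
        rw [hσiter]
        refine Subtype.ext ?_
        rw [hfiter]
        exact Function.iterate_fixed hs _
    refine Nat.card_congr ?_
    refine Equiv.ofBijective (fun s => ⟨s.1.1 0, ?_⟩) ⟨?_, ?_⟩
    · have hc : s.1.1 = fun _ => s.1.1 0 := funext (rot_fixed p s.1.1 ((hmem s.1).mp s.2))
      rw [← hc]
      exact s.1.2
    · rintro ⟨⟨v, hv⟩, hfixv⟩ ⟨⟨w, hw⟩, hfixw⟩ hvw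
      have hv0 : v 0 = w 0 := congrArg Subtype.val hvw
      have hcv : v = fun _ => v 0 := funext (rot_fixed p v ((hmem _).mp hfixv))
      have hcw : w = fun _ => w 0 := funext (rot_fixed p w ((hmem _).mp hfixw))
      refine Subtype.ext (Subtype.ext ?_)
      show v = w
      rw [hcv, hcw, hv0]
    · rintro ⟨x, hx⟩
      refine ⟨⟨⟨fun _ => x, hx⟩, ?_⟩, rfl⟩
      rw [hmem]
      rfl
  rw [← hfix]
  exact hcong

end Rot

variable {Γ : Type*} [Group Γ] [Fintype Γ]

section Defs

variable (p : ℕ)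

/-- Conjugation-orbit sum (with multiplicity) of `g` in the group algebra. -/
noncomputable def Ecl (g : Γ) : MonoidAlgebra (ZMod p) Γ :=
  ∑ t : Γ, MonoidAlgebra.single (t * g * t⁻¹) 1

/-- Sum of the coefficients of `z` over the conjugacy class of `h`. -/
noncomputable def fcl (h : Γ) (z : MonoidAlgebra (ZMod p) Γ) : ZMod p :=
  ∑ u : Γ, if IsConj h u then z.coeff u else 0

/-- `V p e = ∑_{x,y} Ecl (⁅x,y⁆ ^ e)`. -/
noncomputable def V (e : ℕ) : MonoidAlgebra (ZMod p) Γ :=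
  ∑ z : Γ × Γ, Ecl p (⁅z.1, z.2⁆ ^ e)

/-- Number of pairs whose commutator, raised to the power `e`, is conjugate to `h`. -/
noncomputable def Mcnt (e : ℕ) (h : Γ) : ℕ :=
  Nat.card {z : Γ × Γ // IsConj h (⁅z.1, z.2⁆ ^ e)}

/-- Centrality, in explicit form. -/
def IsCent (z : MonoidAlgebra (ZMod p) Γ) : Prop := ∀ r, r * z = z * r

lemma IsCent.mul {z w : MonoidAlgebra (ZMod p) Γ} (hz : IsCent p z) (hw : IsCent p w) :
    IsCent p (z * w) := by
  intro r
  rw [← mul_assoc, hz r, mul_assoc, hw r, mul_assoc]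

lemma IsCent.pow {z : MonoidAlgebra (ZMod p) Γ} (hz : IsCent p z) (n : ℕ) :
    IsCent p (z ^ n) := by
  induction n with
  | zero => intro r; simp
  | succ n ih =>
      rw [pow_succ]
      exact IsCent.mul p ih hz

lemma IsCent.sum {ι : Type*} (s : Finset ι) (F : ι → MonoidAlgebra (ZMod p) Γ)
    (hF : ∀ i ∈ s, IsCent p (F i)) : IsCent p (∑ i ∈ s, F i) := by
  intro r
  rw [Finset.mul_sum, Finset.sum_mul]
  exact Finset.sum_congr rfl fun i hi => hF i hi r

end Defs

variable (p : ℕ) [Fact p.Prime]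

lemma charP_MA : CharP (MonoidAlgebra (ZMod p) Γ) p := by
  refine ⟨fun n => ?_⟩
  rw [MonoidAlgebra.natCast_def, MonoidAlgebra.single_eq_zero, ZMod.natCast_eq_zero_iff]

lemma fcl_sum {ι : Type*} (h : Γ) (s : Finset ι) (F : ι → MonoidAlgebra (ZMod p) Γ) :
    fcl p h (∑ i ∈ s, F i) = ∑ i ∈ s, fcl p h (F i) := by
  rw [fcl]
  have key : ∀ u : Γ, (if IsConj h u then (∑ i ∈ s, F i).coeff u else 0)
      = ∑ i ∈ s, (if IsConj h u then (F i).coeff u else 0) := by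
    intro u
    split_ifs with hc
    · rw [MonoidAlgebra.coeff_sum]
      exact Finsupp.finset_sum_apply s (fun i => (F i).coeff) u
    · simp
  rw [Finset.sum_congr rfl fun u _ => key u, Finset.sum_comm]
  rfl

lemma fcl_single (h x : Γ) :
    fcl p h (MonoidAlgebra.single x (1 : ZMod p)) = if IsConj h x then 1 else 0 := by
  rw [fcl, Finset.sum_eq_single x]
  · simp [MonoidAlgebra.single_apply]
  · intro u _ hu
    simp [MonoidAlgebra.single_apply, Ne.symm hu]
  · simp

lemma Ecl_cent (g : Γ) : IsCent p (Ecl p g : MonoidAlgebra (ZMod p) Γ) := by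
  intro r
  unfold Ecl
  rw [Finset.mul_sum, Finset.sum_mul]
  refine MonoidAlgebra.coeff_injective (Finsupp.ext fun u => ?_)
  rw [MonoidAlgebra.coeff_sum, MonoidAlgebra.coeff_sum, Finsupp.finset_sum_apply, Finsupp.finset_sum_apply]
  simp only [MonoidAlgebra.mul_single_apply, MonoidAlgebra.single_mul_apply, one_mul, mul_one]
  refine Fintype.sum_equiv (Equiv.mulLeft u) _ _ fun t => ?_
  congr 1
  simp only [Equiv.coe_mulLeft]
  group

lemma cent_coeff_conj {z : MonoidAlgebra (ZMod p) Γ} (hz : IsCent p z) (t u : Γ) :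
    z.coeff (t * u * t⁻¹) = z.coeff u := by
  have h := congrArg (fun w : MonoidAlgebra (ZMod p) Γ => w.coeff (t * u)) (hz (MonoidAlgebra.single t 1))
  simp only [MonoidAlgebra.mul_single_apply, MonoidAlgebra.single_mul_apply, one_mul, mul_one] at h
  rw [inv_mul_cancel_left] at h
  exact h.symm

lemma card_class_dvd (h : Γ) : Nat.card {u : Γ // IsConj h u} ∣ Nat.card Γ := by
  have e1 : {u : Γ // IsConj h u} ≃ MulAction.orbit (ConjAct Γ) h :=
    (Equiv.subtypeEquivRight (fun u => by rw [ConjAct.mem_orbit_conjAct, isConj_comm])).symm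
  rw [Nat.card_congr e1, Nat.card_congr (MulAction.orbitEquivQuotientStabilizer (ConjAct Γ) h)]
  have : Nat.card Γ = Nat.card (ConjAct Γ) := Nat.card_congr ConjAct.toConjAct.toEquiv
  rw [this]
  exact Subgroup.card_quotient_dvd_card _

lemma fcl_cent_eq {z : MonoidAlgebra (ZMod p) Γ} (hz : IsCent p z)
    (h : Γ) : fcl p h z = (Nat.card {u : Γ // IsConj h u} : ZMod p) * z.coeff h := by
  have : ∀ u : Γ, (if IsConj h u then z.coeff u else 0) = (if IsConj h u then z.coeff h else 0) := by
    intro u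
    split_ifs with hc
    · obtain ⟨c, hc⟩ := isConj_iff.mp hc
      rw [← hc, cent_coeff_conj p hz]
    · rfl
  rw [fcl]
  rw [Finset.sum_congr rfl fun u _ => this u, ← Finset.sum_filter, Finset.sum_const,
    nsmul_eq_mul]
  congr 1
  rw [Nat.card_eq_fintype_card, Fintype.card_subtype]

lemma cent_eq_of_fcl_eq (hp : ¬ p ∣ Nat.card Γ) {z w : MonoidAlgebra (ZMod p) Γ}
    (hz : IsCent p z) (hw : IsCent p w) (h : ∀ h₀ : Γ, fcl p h₀ z = fcl p h₀ w) :
    z = w := by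
  refine MonoidAlgebra.coeff_injective (Finsupp.ext fun h₀ => ?_)
  have h1 := h h₀
  rw [fcl_cent_eq p hz, fcl_cent_eq p hw] at h1
  have hcd : ¬ (p ∣ Nat.card {u : Γ // IsConj h₀ u}) := fun hd => hp (hd.trans (card_class_dvd h₀))
  have : (Nat.card {u : Γ // IsConj h₀ u} : ZMod p) ≠ 0 := by
    rwa [Ne, ZMod.natCast_eq_zero_iff]
  exact mul_left_cancel₀ this h1

lemma fcl_Ecl (h g : Γ) :
    fcl p h (Ecl p g) = if IsConj h g then (Nat.card Γ : ZMod p) else 0 := by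
  rw [Ecl, fcl_sum]
  have key : ∀ t : Γ, fcl p h (MonoidAlgebra.single (t * g * t⁻¹) (1 : ZMod p))
      = if IsConj h g then 1 else 0 := by
    intro t
    rw [fcl_single]
    congr 1
    rw [eq_iff_iff]
    constructor
    · intro hc
      exact hc.trans (isConj_iff.mpr ⟨t⁻¹, by group⟩)
    · intro hc
      exact hc.trans (isConj_iff.mpr ⟨t, rfl⟩)
  rw [Finset.sum_congr rfl fun t _ => key t]
  split <;> simp [Nat.card_eq_fintype_card, Finset.card_univ, mul_comm]

lemma sum_single_pow {ι : Type*} [Fintype ι] [DecidableEq ι] (n : ℕ) (w : ι → Γ) :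
    (∑ t : ι, MonoidAlgebra.single (w t) (1 : ZMod p)) ^ n
      = ∑ v : Fin n → ι, MonoidAlgebra.single ((List.ofFn fun i => w (v i)).prod) 1 := by
  induction n with
  | zero =>
      rw [pow_zero, Fintype.sum_unique]
      simp [MonoidAlgebra.one_def]
  | succ n ih =>
      rw [pow_succ', ih, Finset.sum_mul_sum]
      rw [← Equiv.sum_comp (Fin.consEquiv (fun _ : Fin (n+1) => ι))
        (fun q => MonoidAlgebra.single ((List.ofFn fun i => w (q i)).prod) (1 : ZMod p))]
      rw [Fintype.sum_prod_type]
      refine Finset.sum_congr rfl fun t _ => Finset.sum_congr rfl fun v _ => ?_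
      rw [MonoidAlgebra.single_mul_single, one_mul]
      congr 1
      have key : (List.ofFn fun i => w ((Fin.consEquiv (fun _ : Fin (n+1) => ι)) (t, v) i))
          = w t :: List.ofFn fun i => w (v i) := by
        rw [List.ofFn_succ]
        simp [Fin.consEquiv]
      rw [key, List.prod_cons]

lemma prod_rot {q : ℕ} [NeZero q] (v : Fin q → Γ) :
    (List.ofFn (rot q v)).prod = (v 0)⁻¹ * (List.ofFn v).prod * (v 0) := by
  have hq : q ≠ 0 := NeZero.ne q
  obtain ⟨n, rfl⟩ : ∃ n, q = n + 1 := ⟨q - 1, by omega⟩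
  have h1 : List.ofFn (rot (n+1) v) = (List.ofFn fun j : Fin n => v j.succ).concat (v 0) := by
    rw [List.ofFn_succ']
    congr 1
    · congr 1
      funext j
      show v (j.castSucc + 1) = v j.succ
      rw [Fin.coeSucc_eq_succ]
    · show v (Fin.last n + 1) = v 0
      rw [Fin.last_add_one]
  have h2 : List.ofFn v = v 0 :: List.ofFn fun j : Fin n => v j.succ := List.ofFn_succ (f := v)
  rw [h1, List.prod_concat, h2, List.prod_cons]
  group

/-- The crux: a Frobenius identity for orbit sums. -/
lemma Ecl_pow (hp : ¬ p ∣ Nat.card Γ) (g : Γ) :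
    (Ecl p g : MonoidAlgebra (ZMod p) Γ) ^ p = Ecl p (g ^ p) := by
  haveI : NeZero p := ⟨(Fact.out : p.Prime).ne_zero⟩
  have hcent1 : IsCent p ((Ecl p g : MonoidAlgebra (ZMod p) Γ) ^ p) :=
    IsCent.pow p (Ecl_cent p g) p
  apply cent_eq_of_fcl_eq p hp hcent1 (Ecl_cent p (g^p))
  intro h
  rw [fcl_Ecl]
  rw [Ecl, sum_single_pow, fcl_sum]
  set Q : (Fin p → Γ) → Prop :=
    fun v => IsConj h ((List.ofFn fun i => (v i) * g * (v i)⁻¹).prod) with hQdef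
  have hterm : ∀ v : Fin p → Γ,
      fcl p h (MonoidAlgebra.single ((List.ofFn fun i => (v i) * g * (v i)⁻¹).prod) (1 : ZMod p))
      = if Q v then 1 else 0 := fun v => fcl_single p h _
  rw [Finset.sum_congr rfl fun v _ => hterm v, ← Finset.sum_filter, Finset.sum_const,
    nsmul_eq_mul, mul_one]
  have hrotQ : ∀ v, Q v → Q (rot p v) := by
    intro v hv
    have hlist : (fun i => (rot p v i) * g * (rot p v i)⁻¹)
        = rot p (fun i => (v i) * g * (v i)⁻¹) := rfl
    rw [hQdef]
    simp only
    rw [hlist, prod_rot]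
    refine hv.trans (isConj_iff.mpr ⟨((v 0) * g * (v 0)⁻¹)⁻¹, by group⟩)
  have hcount := card_modEq_card_fixed p Q hrotQ
  have hconst : ∀ x : Γ, Q (fun _ => x) ↔ IsConj h (g ^ p) := by
    intro x
    rw [hQdef]
    simp only
    rw [List.ofFn_const, List.prod_replicate]
    constructor
    · intro hc
      refine hc.trans ?_
      rw [conj_pow]
      exact isConj_iff.mpr ⟨x⁻¹, by group⟩
    · intro hc
      refine hc.trans ?_
      rw [conj_pow]
      exact isConj_iff.mpr ⟨x, rfl⟩
  have hfixcard : Nat.card {x : Γ // Q (fun _ => x)}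
      = if IsConj h (g ^ p) then Nat.card Γ else 0 := by
    split_ifs with hc
    · refine Nat.card_congr (Equiv.subtypeUnivEquiv ?_)
      intro x
      exact (hconst x).mpr hc
    · rw [Nat.card_eq_zero]
      left
      refine ⟨fun s => hc ((hconst s.1).mp s.2)⟩
  have hcard : ((Finset.univ.filter Q).card : ZMod p) = Nat.card {v : Fin p → Γ // Q v} := by
    rw [Nat.card_eq_fintype_card, Fintype.card_subtype]
  rw [hcard, (ZMod.natCast_eq_natCast_iff _ _ _).mpr hcount, hfixcard]
  split_ifs with hc <;> simp

lemma sum_pow_char_of_cent {ι : Type*} (s : Finset ι) (F : ι → MonoidAlgebra (ZMod p) Γ)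
    (hF : ∀ i ∈ s, IsCent p (F i)) :
    (∑ i ∈ s, F i) ^ p = ∑ i ∈ s, F i ^ p := by
  haveI := charP_MA (Γ := Γ) p
  classical
  induction s using Finset.induction_on with
  | empty => simp [zero_pow (Fact.out : p.Prime).ne_zero]
  | insert a s' hnotmem ih =>
      rw [Finset.sum_insert hnotmem, Finset.sum_insert hnotmem]
      rw [add_pow_char_of_commute _ ((hF a (Finset.mem_insert_self a s') _).symm)]
      rw [ih (fun i hi => hF i (Finset.mem_insert_of_mem hi))]

lemma V_one_eq_W : (V p 1 : MonoidAlgebra (ZMod p) Γ) = ∑ y : Γ, Ecl p y * Ecl p y⁻¹ := by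
  have key : ∀ y : Γ, Ecl p y * Ecl p y⁻¹ = ∑ u : Γ, Ecl p ⁅y, u⁆ := by
    intro y
    rw [Ecl, Ecl, Finset.sum_mul_sum]
    simp only [MonoidAlgebra.single_mul_single, one_mul]
    have inner : ∀ t : Γ, (∑ s : Γ, MonoidAlgebra.single ((t * y * t⁻¹) * (s * y⁻¹ * s⁻¹))
        (1 : ZMod p)) = ∑ u : Γ, MonoidAlgebra.single (t * ⁅y, u⁆ * t⁻¹) 1 := by
      intro t
      rw [← Equiv.sum_comp (Equiv.mulLeft t)
        (fun s => MonoidAlgebra.single ((t * y * t⁻¹) * (s * y⁻¹ * s⁻¹)) (1 : ZMod p))]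
      refine Finset.sum_congr rfl fun u _ => ?_
      congr 1
      simp only [Equiv.coe_mulLeft]
      rw [commutatorElement_def]
      group
    rw [Finset.sum_congr rfl fun t _ => inner t, Finset.sum_comm]
    rfl
  rw [V, Fintype.sum_prod_type]
  simp only [pow_one]
  exact (Finset.sum_congr rfl fun y _ => (key y).symm)

lemma W_pow (hp : ¬ p ∣ Nat.card Γ) :
    (∑ y : Γ, Ecl p y * Ecl p y⁻¹ : MonoidAlgebra (ZMod p) Γ) ^ p
      = ∑ y : Γ, Ecl p y * Ecl p y⁻¹ := by
  rw [sum_pow_char_of_cent p _ _ (fun y _ => IsCent.mul p (Ecl_cent p y) (Ecl_cent p y⁻¹))]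
  have key : ∀ y : Γ, (Ecl p y * Ecl p y⁻¹ : MonoidAlgebra (ZMod p) Γ) ^ p
      = Ecl p (y ^ p) * Ecl p ((y ^ p)⁻¹) := by
    intro y
    rw [Commute.mul_pow ((Ecl_cent p y) (Ecl p y⁻¹)).symm]
    rw [Ecl_pow p hp, Ecl_pow p hp, inv_pow]
  rw [Finset.sum_congr rfl fun y _ => key y]
  have hco : (Nat.card Γ).Coprime p :=
    (((Fact.out : p.Prime).coprime_iff_not_dvd).mpr hp).symm
  rw [← Equiv.sum_comp (powCoprime hco)
    (fun z => Ecl p z * Ecl p z⁻¹ : Γ → MonoidAlgebra (ZMod p) Γ)]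
  rfl

lemma V_pow (hp : ¬ p ∣ Nat.card Γ) (e : ℕ) :
    (V p e : MonoidAlgebra (ZMod p) Γ) ^ p = V p (e * p) := by
  rw [V, V, sum_pow_char_of_cent p _ _ (fun z _ => Ecl_cent p _)]
  refine Finset.sum_congr rfl fun z _ => ?_
  rw [Ecl_pow p hp, ← pow_mul]

lemma V_cent (e : ℕ) : IsCent p (V p e : MonoidAlgebra (ZMod p) Γ) :=
  IsCent.sum p _ _ fun z _ => Ecl_cent p _

lemma fcl_V (e : ℕ) (h : Γ) :
    fcl p h (V p e : MonoidAlgebra (ZMod p) Γ)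
      = (Nat.card Γ : ZMod p) * (Mcnt e h : ZMod p) := by
  rw [V, fcl_sum]
  rw [Finset.sum_congr rfl fun z _ => fcl_Ecl p h _]
  rw [← Finset.sum_filter, Finset.sum_const, nsmul_eq_mul, mul_comm]
  congr 1
  rw [Mcnt, Nat.card_eq_fintype_card, Fintype.card_subtype]

lemma Mcnt_le (e : ℕ) (h : Γ) : Mcnt e h ≤ (Nat.card Γ) ^ 2 := by
  rw [Mcnt, sq]
  calc Nat.card {z : Γ × Γ // IsConj h (⁅z.1, z.2⁆ ^ e)} ≤ Nat.card (Γ × Γ) :=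
        Nat.card_le_card_of_injective _ Subtype.val_injective
    _ = Nat.card Γ * Nat.card Γ := Nat.card_prod Γ Γ

/-- The single-prime step of the chain. -/
lemma step (hq : (Nat.card Γ) ^ 2 < p) (e : ℕ)
    (hS : ∀ h : Γ, Mcnt e h = Mcnt 1 h) :
    ∀ h : Γ, Mcnt (e * p) h = Mcnt 1 h := by
  intro h
  have hcard1 : 1 ≤ Nat.card Γ := Nat.card_pos
  have hcc : Nat.card Γ ≤ (Nat.card Γ) ^ 2 := by nlinarith
  have hp : ¬ p ∣ Nat.card Γ := by
    intro hd
    have := Nat.le_of_dvd (by omega) hd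
    omega
  have hVe : (V p e : MonoidAlgebra (ZMod p) Γ) = V p 1 := by
    apply cent_eq_of_fcl_eq p hp (V_cent p e) (V_cent p 1)
    intro h₀
    rw [fcl_V, fcl_V, hS h₀]
  have hchain : (V p (e * p) : MonoidAlgebra (ZMod p) Γ) = V p 1 := by
    calc (V p (e * p) : MonoidAlgebra (ZMod p) Γ) = (V p e) ^ p := (V_pow p hp e).symm
      _ = (V p 1) ^ p := by rw [hVe]
      _ = (∑ y : Γ, Ecl p y * Ecl p y⁻¹) ^ p := by rw [V_one_eq_W]
      _ = ∑ y : Γ, Ecl p y * Ecl p y⁻¹ := W_pow p hp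
      _ = V p 1 := (V_one_eq_W p).symm
  have h2 := congrArg (fcl p h) hchain
  rw [fcl_V, fcl_V] at h2
  have hne : (Nat.card Γ : ZMod p) ≠ 0 := by
    rw [Ne, ZMod.natCast_eq_zero_iff]
    exact hp
  have h3 : (Mcnt (e * p) h : ZMod p) = (Mcnt 1 h : ZMod p) := mul_left_cancel₀ hne h2
  have h4 := (ZMod.natCast_eq_natCast_iff _ _ _).mp h3
  have h5 := Mcnt_le (e * p) h
  have h6 := Mcnt_le 1 h
  rwa [Nat.ModEq, Nat.mod_eq_of_lt (by omega), Nat.mod_eq_of_lt (by omega)] at h4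

/-- Chaining the single-prime steps along a factorization into large primes. -/
lemma chain : ∀ X : ℕ, 1 ≤ X → (∀ q : ℕ, q.Prime → q ∣ X → (Nat.card Γ) ^ 2 < q) →
    ∀ h : Γ, Mcnt (Γ := Γ) X h = Mcnt (Γ := Γ) 1 h := by
  intro X
  induction X using Nat.strong_induction_on with
  | _ X ih =>
    intro hX hfac h
    rcases eq_or_lt_of_le hX with h1 | h1
    · rw [← h1]
    · have hX1 : X ≠ 1 := by omega
      have hqp : X.minFac.Prime := Nat.minFac_prime hX1
      have hqd : X.minFac ∣ X := Nat.minFac_dvd X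
      set q := X.minFac
      set Y := X / q with hY
      have hXYq : X = Y * q := (Nat.div_mul_cancel hqd).symm
      have hYpos : 1 ≤ Y := Nat.div_pos (Nat.le_of_dvd (by omega) hqd) hqp.pos
      have hYlt : Y < X := Nat.div_lt_self (by omega) hqp.one_lt
      have hfacY : ∀ r : ℕ, r.Prime → r ∣ Y → (Nat.card Γ) ^ 2 < r :=
        fun r hr hrY => hfac r hr (hrY.trans ⟨q, hXYq⟩)
      have hSY := ih Y hYlt hYpos hfacY
      haveI : Fact q.Prime := ⟨hqp⟩
      have hstep := step q (hfac q hqp hqd) Y hSY h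
      rw [hXYq]
      exact hstep

end HondaAux

namespace HondaAux

attribute [local instance] Classical.propDecidable

/-- Honda's theorem for finite groups. -/
theorem honda_finite {Γ : Type*} [Group Γ] [Finite Γ] (a b δ : Γ)
    (h1 : ∃ t : ℤ, ⁅a, b⁆ ^ t = δ) (h2 : ∃ s : ℤ, δ ^ s = ⁅a, b⁆) :
    ∃ σ τ : Γ, δ = ⁅σ, τ⁆ := by
  haveI := Fintype.ofFinite Γ
  set c := ⁅a, b⁆ with hc
  -- convert to natural powers
  have hfinc : IsOfFinOrder c := isOfFinOrder_of_finite c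
  have hfinδ : IsOfFinOrder δ := isOfFinOrder_of_finite δ
  obtain ⟨t, ht⟩ := h1
  obtain ⟨s, hs⟩ := h2
  have hδmem : δ ∈ Submonoid.powers c :=
    hfinc.mem_powers_iff_mem_zpowers.mpr ⟨t, by rw [← ht]⟩
  have hcmem : c ∈ Submonoid.powers δ :=
    hfinδ.mem_powers_iff_mem_zpowers.mpr ⟨s, by rw [← hs]⟩
  obtain ⟨A, hA'⟩ := hδmem
  obtain ⟨B, hB'⟩ := hcmem
  have hA : c ^ A = δ := hA'
  have hB : δ ^ B = c := hB'
  set n := orderOf c with hn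
  have hnpos : 0 < n := hfinc.orderOf_pos
  -- A * B ≡ 1 mod n
  have hAB : c ^ (A * B) = c ^ 1 := by
    rw [pow_mul, hA, hB, pow_one]
  have hABmod : A * B ≡ 1 [MOD n] := pow_eq_pow_iff_modEq.mp hAB
  -- A is coprime to n
  have hcop : Nat.Coprime A n := Nat.coprime_of_mul_modEq_one B hABmod
  -- build the exponent X with all prime factors large
  set Bd := (Nat.card Γ) ^ 2 with hBd
  set M := ∏ r ∈ (Finset.range (Bd + 1)).filter (fun r => r.Prime ∧ ¬ r ∣ n), r with hM
  have hMpos : 0 < M := Finset.prod_pos fun r hr =>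
    ((Finset.mem_filter.mp hr).2.1).pos
  have hnM : n.Coprime M := by
    apply Nat.Coprime.prod_right
    intro r hr
    obtain ⟨hr1, hr2⟩ := Finset.mem_filter.mp hr
    exact ((hr2.1.coprime_iff_not_dvd).mpr hr2.2).symm
  obtain ⟨X₀, hX₀n, hX₀M⟩ := Nat.chineseRemainder hnM A 1
  set X := X₀ + n * M with hX
  have hXn : X ≡ A [MOD n] := by
    refine Nat.ModEq.trans ?_ hX₀n
    show X % n = X₀ % n
    rw [hX, mul_comm n M, Nat.add_mul_mod_self_right]
  have hXM : X ≡ 1 [MOD M] := by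
    refine Nat.ModEq.trans ?_ hX₀M
    show X % M = X₀ % M
    rw [hX, Nat.add_mul_mod_self_right]
  have hX1 : 1 ≤ X := by
    have : 1 ≤ n * M := Nat.one_le_iff_ne_zero.mpr (by positivity)
    omega
  have hfac : ∀ r : ℕ, r.Prime → r ∣ X → Bd < r := by
    intro r hrp hrX
    by_contra hle
    push_neg at hle
    by_cases hrn : r ∣ n
    · have h3 : X ≡ A [MOD r] := Nat.ModEq.of_dvd hrn hXn
      have h4 : r ∣ A := by
        have h5 : A ≡ 0 [MOD r] := h3.symm.trans (Nat.modEq_zero_iff_dvd.mpr hrX)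
        exact Nat.modEq_zero_iff_dvd.mp h5
      have h6 : r ∣ Nat.gcd A n := Nat.dvd_gcd h4 hrn
      rw [hcop] at h6
      exact hrp.one_lt.ne' (Nat.dvd_one.mp h6)
    · have hrM : r ∣ M := Finset.dvd_prod_of_mem _ (Finset.mem_filter.mpr
        ⟨Finset.mem_range.mpr (by omega), hrp, hrn⟩)
      have h3 : X ≡ 1 [MOD r] := Nat.ModEq.of_dvd hrM hXM
      have h4 : r ∣ 1 := by
        have h5 : (1 : ℕ) ≡ 0 [MOD r] := h3.symm.trans (Nat.modEq_zero_iff_dvd.mpr hrX)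
        exact Nat.modEq_zero_iff_dvd.mp h5
      exact hrp.one_lt.ne' (Nat.dvd_one.mp h4)
  -- δ = c ^ X
  have hδX : c ^ X = δ := by
    rw [← hA]
    exact pow_eq_pow_iff_modEq.mpr hXn
  -- apply the chain
  have hchain := chain X hX1 hfac δ
  have hpos : 0 < Mcnt (Γ := Γ) X δ := by
    rw [Mcnt]
    have hConj : IsConj δ (⁅a, b⁆ ^ X) := by rw [← hc, hδX]
    haveI : Nonempty {z : Γ × Γ // IsConj δ (⁅z.1, z.2⁆ ^ X)} := ⟨⟨(a, b), hConj⟩⟩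
    exact Nat.card_pos
  rw [hchain] at hpos
  rw [Mcnt] at hpos
  obtain ⟨⟨⟨x, y⟩, hxy⟩⟩ := (Nat.card_pos_iff.mp hpos).1
  simp only [pow_one] at hxy
  obtain ⟨w, hw⟩ := isConj_iff.mp hxy
  refine ⟨w⁻¹ * x * w, w⁻¹ * y * w, ?_⟩
  have hδeq : δ = w⁻¹ * ⁅x, y⁆ * w := by rw [← hw]; group
  rw [hδeq]
  simp only [commutatorElement_def]
  group

end HondaAux

/-- Every locally finite group has the strong Honda property. -/
theorem locally_finite_strong_honda {G : Type*} [Group G]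
    (hG : ∀ H : Subgroup G, H.FG → Finite H)
    (α β δ : G)
    (hδ : Subgroup.zpowers δ = Subgroup.zpowers ⁅α, β⁆) :
    ∃ σ ∈ Subgroup.closure ({α, β} : Set G), ∃ τ ∈ Subgroup.closure ({α, β} : Set G),
      δ = ⁅σ, τ⁆ := by
  classical
  set H := Subgroup.closure ({α, β} : Set G) with hH
  have hHfg : H.FG := ⟨{α, β}, by simp [hH]⟩
  haveI : Finite H := hG H hHfg
  have hα : α ∈ H := Subgroup.subset_closure (by simp)
  have hβ : β ∈ H := Subgroup.subset_closure (by simp)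
  have hcH : ⁅α, β⁆ ∈ H := by
    rw [commutatorElement_def]
    exact mul_mem (mul_mem (mul_mem hα hβ) (inv_mem hα)) (inv_mem hβ)
  have hδzp : δ ∈ Subgroup.zpowers ⁅α, β⁆ := hδ ▸ Subgroup.mem_zpowers δ
  have hczp : ⁅α, β⁆ ∈ Subgroup.zpowers δ := hδ.symm ▸ Subgroup.mem_zpowers ⁅α, β⁆
  obtain ⟨t, ht⟩ := Subgroup.mem_zpowers_iff.mp hδzp
  obtain ⟨s, hs⟩ := Subgroup.mem_zpowers_iff.mp hczp
  have hδH : δ ∈ H := by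
    rw [← ht]
    exact zpow_mem hcH t
  set a' : H := ⟨α, hα⟩
  set b' : H := ⟨β, hβ⟩
  set d' : H := ⟨δ, hδH⟩
  have hcoe : ((⁅a', b'⁆ : H) : G) = ⁅α, β⁆ := by
    simp [commutatorElement_def, a', b']
  have h1 : ∃ u : ℤ, ⁅a', b'⁆ ^ u = d' := by
    refine ⟨t, Subtype.ext ?_⟩
    show ((⁅a', b'⁆ ^ t : H) : G) = δ
    rw [SubgroupClass.coe_zpow, hcoe, ht]
  have h2 : ∃ v : ℤ, d' ^ v = ⁅a', b'⁆ := by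
    refine ⟨s, Subtype.ext ?_⟩
    show ((d' ^ s : H) : G) = ((⁅a', b'⁆ : H) : G)
    rw [SubgroupClass.coe_zpow, hcoe]
    exact hs
  obtain ⟨σ', τ', hστ⟩ := HondaAux.honda_finite a' b' d' h1 h2
  refine ⟨(σ' : G), σ'.2, (τ' : G), τ'.2, ?_⟩
  show δ = ⁅(σ' : G), (τ' : G)⁆
  have h3 : δ = ((⁅σ', τ'⁆ : H) : G) := congrArg Subtype.val hστ
  rw [h3]
  simp [commutatorElement_def]
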